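/- The 1-Wasserstein distance between two univariate Gaussians N(μ₁,σ₁²) and N(μ₂,σ₂²) with σ₁ ≠ σ₂ equals |μ_y|(1 − 2Φ(−|μ_y|/|σ_y|)) + |σ_y|√(2/π)·exp(−μ_y²/(2σ_y²)), where μ_y = μ₁ − μ₂ and σ_y = σ₁ − σ₂. -/

import Mathlib

/-! Substituting `q = Φ x` turns the quantile integral into `E|μ + σZ|` with `Z ~ N(0,1)`,
`μ = μ₁ - μ₂` and `σ = σ₁ - σ₂`. As `Z` and `-Z` have the same law, only `|μ|` and `|σ|` matter.
For `σ > 0`, split the line at the zero `a = -μ/σ` of `x ↦ μ + σx`: since `φ' = -xφ`,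
`∫_{x>a} x φ = φ a = -∫_{x≤a} x φ`, which gives `μ (1 - 2Φ(a)) + 2σ φ(a)`. -/

open MeasureTheory Set Real

noncomputable def stdNormalCDF (x : ℝ) : ℝ :=
  ∫ t in Iic x, (1 / Real.sqrt (2 * π)) * Real.exp (-t ^ 2 / 2)

open Filter Topology ProbabilityTheory
open scoped NNReal

local notation "φ" => gaussianPDFReal 0 1

lemma gaussianPDFReal_zero_one (x : ℝ) : φ x = 1 / √(2 * π) * exp (-x ^ 2 / 2) := by
  simp [gaussianPDFReal]

lemma gaussianPDFReal_zero_one_neg (x : ℝ) : φ (-x) = φ x := by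
  simp [gaussianPDFReal_zero_one]

lemma continuous_gaussianPDFReal (μ : ℝ) (v : ℝ≥0) : Continuous (gaussianPDFReal μ v) := by
  unfold gaussianPDFReal; fun_prop

lemma hasDerivAt_gaussianPDFReal_zero_one (x : ℝ) : HasDerivAt φ (-(x * φ x)) x := by
  have h : HasDerivAt (fun y : ℝ => -y ^ 2 / 2) (-x) x :=
    ((hasDerivAt_pow 2 x).neg.div_const 2).congr_deriv (by ring)
  rw [funext gaussianPDFReal_zero_one]
  exact (h.exp.const_mul _).congr_deriv (by ring)

lemma tendsto_gaussianPDFReal_zero_one_cocompact : Tendsto φ (cocompact ℝ) (𝓝 0) := by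
  have h : Tendsto (fun x : ℝ => ‖x‖ ^ 2 / 2) (cocompact ℝ) atTop :=
    ((tendsto_pow_atTop two_ne_zero).comp tendsto_norm_cocompact_atTop).atTop_div_const two_pos
  have := (tendsto_exp_atBot.comp (tendsto_neg_atTop_atBot.comp h)).const_mul (1 / √(2 * π))
  rw [mul_zero] at this
  refine this.congr fun x => ?_
  simp [gaussianPDFReal_zero_one, neg_div]

lemma integrable_mul_gaussianPDFReal_zero_one : Integrable fun x => x * φ x := by
  refine ((integrable_mul_exp_neg_mul_sq (b := 1 / 2) (by norm_num)).const_mul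
    (1 / √(2 * π))).congr (ae_of_all _ fun x => ?_)
  simp only [gaussianPDFReal_zero_one]; ring_nf

lemma stdNormalCDF_eq_setIntegral (x : ℝ) : stdNormalCDF x = ∫ t in Iic x, φ t := by
  simp only [stdNormalCDF, gaussianPDFReal_zero_one]

lemma stdNormalCDF_eq_cdf : stdNormalCDF = cdf (gaussianReal 0 1) := by
  ext x
  rw [cdf_eq_real, measureReal_def, gaussianReal_apply_eq_integral _ one_ne_zero,
    ENNReal.toReal_ofReal (setIntegral_nonneg measurableSet_Iic fun t _ =>
      gaussianPDFReal_nonneg 0 1 t), stdNormalCDF_eq_setIntegral]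

lemma hasDerivAt_stdNormalCDF (x : ℝ) : HasDerivAt stdNormalCDF (φ x) x := by
  have hint := integrable_gaussianPDFReal 0 1
  have h : ∀ y, stdNormalCDF y = stdNormalCDF 0 + ∫ t in (0:ℝ)..y, φ t := fun y => by
    rw [stdNormalCDF_eq_setIntegral, stdNormalCDF_eq_setIntegral,
      ← intervalIntegral.integral_Iic_sub_Iic hint.integrableOn hint.integrableOn]
    ring
  rw [funext h]
  exact (intervalIntegral.integral_hasDerivAt_right hint.intervalIntegrable
    (continuous_gaussianPDFReal 0 1).stronglyMeasurable.stronglyMeasurableAtFilter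
    (continuous_gaussianPDFReal 0 1).continuousAt).const_add _

lemma strictMono_stdNormalCDF : StrictMono stdNormalCDF :=
  strictMono_of_hasDerivAt_pos hasDerivAt_stdNormalCDF
    fun x => gaussianPDFReal_pos 0 1 x one_ne_zero

lemma range_stdNormalCDF : range stdNormalCDF = Ioo 0 1 := by
  have hbot : Tendsto stdNormalCDF atBot (𝓝 0) := stdNormalCDF_eq_cdf ▸ tendsto_cdf_atBot _
  have htop : Tendsto stdNormalCDF atTop (𝓝 1) := stdNormalCDF_eq_cdf ▸ tendsto_cdf_atTop _
  refine Subset.antisymm ?_ fun q hq => ?_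
  · rintro _ ⟨x, rfl⟩
    exact ⟨(strictMono_stdNormalCDF.monotone.le_of_tendsto hbot (x - 1)).trans_lt
        (strictMono_stdNormalCDF (sub_one_lt x)),
      (strictMono_stdNormalCDF (lt_add_one x)).trans_le
        (strictMono_stdNormalCDF.monotone.ge_of_tendsto htop (x + 1))⟩
  · exact mem_range_of_exists_le_of_exists_ge
      (continuous_iff_continuousAt.2 fun x => (hasDerivAt_stdNormalCDF x).continuousAt)
      ((hbot.eventually_le_const hq.1).exists) ((htop.eventually_const_le hq.2).exists)

lemma setIntegral_Ioo_comp_rightInverse_stdNormalCDF {E : Type*} [NormedAddCommGroup E]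
    [NormedSpace ℝ E] {Φinv : ℝ → ℝ} (hΦinv : ∀ q ∈ Ioo (0:ℝ) 1, stdNormalCDF (Φinv q) = q)
    (g : ℝ → E) : ∫ q in Ioo (0:ℝ) 1, g (Φinv q) = ∫ x, φ x • g x := by
  have hleft : ∀ x, Φinv (stdNormalCDF x) = x := fun x =>
    strictMono_stdNormalCDF.injective (hΦinv _ (range_stdNormalCDF ▸ mem_range_self x))
  rw [← range_stdNormalCDF, ← image_univ, integral_image_eq_integral_abs_deriv_smul
    MeasurableSet.univ (fun x _ => (hasDerivAt_stdNormalCDF x).hasDerivWithinAt)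
    strictMono_stdNormalCDF.injective.injOn, Measure.restrict_univ]
  simp_rw [hleft, abs_of_pos (gaussianPDFReal_pos 0 1 _ one_ne_zero)]

lemma setIntegral_Ioi_mul_gaussianPDFReal_zero_one (a : ℝ) : ∫ x in Ioi a, x * φ x = φ a := by
  simpa using integral_Ioi_of_hasDerivAt_of_tendsto' (f := fun x => -φ x) (m := 0)
    (fun x _ => (hasDerivAt_gaussianPDFReal_zero_one x).neg)
    integrable_mul_gaussianPDFReal_zero_one.integrableOn.neg.neg
    (by simpa using (tendsto_gaussianPDFReal_zero_one_cocompact.mono_left atTop_le_cocompact).neg)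

lemma setIntegral_Iic_mul_gaussianPDFReal_zero_one (a : ℝ) : ∫ x in Iic a, x * φ x = -φ a := by
  simpa using integral_Iic_of_hasDerivAt_of_tendsto' (f := fun x => -φ x) (m := 0)
    (fun x _ => (hasDerivAt_gaussianPDFReal_zero_one x).neg)
    integrable_mul_gaussianPDFReal_zero_one.integrableOn.neg.neg
    (by simpa using (tendsto_gaussianPDFReal_zero_one_cocompact.mono_left atBot_le_cocompact).neg)

lemma setIntegral_Ioi_gaussianPDFReal_zero_one (a : ℝ) :
    ∫ x in Ioi a, φ x = 1 - stdNormalCDF a := by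
  have h := integral_add_compl (measurableSet_Iic (a := a)) (integrable_gaussianPDFReal 0 1)
  rw [compl_Iic, integral_gaussianPDFReal_eq_one 0 one_ne_zero,
    ← stdNormalCDF_eq_setIntegral] at h
  linarith

lemma integrable_gaussianPDFReal_zero_one_mul_affine (μ σ : ℝ) :
    Integrable fun x => φ x * (μ + σ * x) :=
  (((integrable_gaussianPDFReal 0 1).const_mul μ).add
    (integrable_mul_gaussianPDFReal_zero_one.const_mul σ)).congr
    (ae_of_all _ fun x => by simp only [Pi.add_apply]; ring)

lemma setIntegral_gaussianPDFReal_zero_one_mul_affine (s : Set ℝ) (μ σ : ℝ) :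
    ∫ x in s, φ x * (μ + σ * x) = μ * (∫ x in s, φ x) + σ * ∫ x in s, x * φ x := by
  rw [← integral_const_mul, ← integral_const_mul, ← integral_add
    ((integrable_gaussianPDFReal 0 1).const_mul μ).integrableOn
    (integrable_mul_gaussianPDFReal_zero_one.const_mul σ).integrableOn]
  congr 1 with x
  ring

lemma integral_gaussianPDFReal_zero_one_mul_abs_affine (μ : ℝ) {σ : ℝ} (hσ : 0 < σ) :
    ∫ x, φ x * |μ + σ * x| = μ * (1 - 2 * stdNormalCDF (-(μ / σ))) + 2 * σ * φ (μ / σ) := by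
  set a := -(μ / σ)
  have hfactor : ∀ x, μ + σ * x = σ * (x - a) := fun x => by
    simp only [a]; field_simp; ring
  have hint : Integrable fun x => φ x * |μ + σ * x| :=
    (integrable_gaussianPDFReal_zero_one_mul_affine μ σ).abs.congr (ae_of_all _ fun x => by
      simp only [abs_mul, abs_of_nonneg (gaussianPDFReal_nonneg 0 1 x)])
  rw [← integral_add_compl measurableSet_Iic hint, compl_Iic,
    setIntegral_congr_fun measurableSet_Iic (g := fun x => -(φ x * (μ + σ * x))) fun x hx => by
      rw [abs_of_nonpos (hfactor x ▸ mul_nonpos_of_nonneg_of_nonpos hσ.le (sub_nonpos.2 hx)),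
        mul_neg],
    setIntegral_congr_fun measurableSet_Ioi (g := fun x => φ x * (μ + σ * x)) fun x hx => by
      rw [abs_of_nonneg (hfactor x ▸ mul_nonneg hσ.le (sub_nonneg.2 (le_of_lt hx)))],
    integral_neg, setIntegral_gaussianPDFReal_zero_one_mul_affine,
    setIntegral_gaussianPDFReal_zero_one_mul_affine, ← stdNormalCDF_eq_setIntegral,
    setIntegral_Ioi_gaussianPDFReal_zero_one, setIntegral_Iic_mul_gaussianPDFReal_zero_one,
    setIntegral_Ioi_mul_gaussianPDFReal_zero_one, gaussianPDFReal_zero_one_neg]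
  ring

lemma integral_gaussianPDFReal_zero_one_mul_comp_neg (g : ℝ → ℝ) :
    ∫ x, φ x * g (-x) = ∫ x, φ x * g x := by
  simpa only [gaussianPDFReal_zero_one_neg, neg_neg] using
    (integral_neg_eq_self (fun x => φ x * g (-x)) volume).symm

lemma integral_gaussianPDFReal_zero_one_mul_abs_affine_eq_abs_abs (μ σ : ℝ) :
    ∫ x, φ x * |μ + σ * x| = ∫ x, φ x * |(|μ| + |σ| * x)| := by
  have hneg_σ : ∀ m s : ℝ, ∫ x, φ x * |m + -s * x| = ∫ x, φ x * |m + s * x| := fun m s => by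
    simpa only [mul_neg, neg_mul] using
      integral_gaussianPDFReal_zero_one_mul_comp_neg fun x => |m + s * x|
  have hneg_μ : ∀ m s : ℝ, ∫ x, φ x * |-m + s * x| = ∫ x, φ x * |m + s * x| := fun m s => by
    simp_rw [← hneg_σ m s, ← abs_neg (-m + _), neg_add, neg_neg, neg_mul]
  rcases abs_choice μ with hμ | hμ <;> rcases abs_choice σ with hσ | hσ <;>
    simp only [hμ, hσ, hneg_σ, hneg_μ]

theorem wasserstein1_gaussians_exact_general
    (Φinv : ℝ → ℝ) (hΦinv : ∀ q ∈ Ioo (0:ℝ) 1, stdNormalCDF (Φinv q) = q)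
    (μ₁ μ₂ σ₁ σ₂ : ℝ) (hne : σ₁ ≠ σ₂) :
    ∫ q in Ioo (0:ℝ) 1, |(μ₁ + σ₁ * Φinv q) - (μ₂ + σ₂ * Φinv q)| =
      |μ₁ - μ₂| * (1 - 2 * stdNormalCDF (-(|μ₁ - μ₂| / |σ₁ - σ₂|))) +
        |σ₁ - σ₂| * Real.sqrt (2 / π) *
          Real.exp (-(μ₁ - μ₂) ^ 2 / (2 * (σ₁ - σ₂) ^ 2)) := by
  have hσ : 0 < |σ₁ - σ₂| := abs_pos.2 (sub_ne_zero.2 hne)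
  have hsqrt : √(2 / π) = 2 / √(2 * π) := by
    rw [eq_div_iff (by positivity), ← sqrt_mul (by positivity),
      show 2 / π * (2 * π) = 2 ^ 2 by field_simp, sqrt_sq zero_le_two]
  calc ∫ q in Ioo (0:ℝ) 1, |(μ₁ + σ₁ * Φinv q) - (μ₂ + σ₂ * Φinv q)|
      = ∫ x, φ x * |(μ₁ - μ₂) + (σ₁ - σ₂) * x| := by
        simp_rw [show ∀ q, μ₁ + σ₁ * Φinv q - (μ₂ + σ₂ * Φinv q) = μ₁ - μ₂ + (σ₁ - σ₂) * Φinv q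
          from fun q => by ring]
        exact setIntegral_Ioo_comp_rightInverse_stdNormalCDF hΦinv
          fun x => |μ₁ - μ₂ + (σ₁ - σ₂) * x|
    _ = ∫ x, φ x * |(|μ₁ - μ₂| + |σ₁ - σ₂| * x)| :=
        integral_gaussianPDFReal_zero_one_mul_abs_affine_eq_abs_abs _ _
    _ = _ := by
        rw [integral_gaussianPDFReal_zero_one_mul_abs_affine _ hσ, gaussianPDFReal_zero_one,
          div_pow, sq_abs, sq_abs, hsqrt,
          show ∀ a b : ℝ, -(a / b) / 2 = -a / (2 * b) from fun a b => by ring]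
        ring

theorem wasserstein1_gaussians_exact
    (Φinv : ℝ → ℝ) (hΦinv : ∀ q ∈ Ioo (0:ℝ) 1, stdNormalCDF (Φinv q) = q)
    (μ₁ μ₂ σ₁ σ₂ : ℝ) (hσ₁ : 0 < σ₁) (hσ₂ : 0 < σ₂) (hne : σ₁ ≠ σ₂) :
    ∫ q in Ioo (0:ℝ) 1, |(μ₁ + σ₁ * Φinv q) - (μ₂ + σ₂ * Φinv q)| =
      |μ₁ - μ₂| * (1 - 2 * stdNormalCDF (-(|μ₁ - μ₂| / |σ₁ - σ₂|))) +
        |σ₁ - σ₂| * Real.sqrt (2 / π) *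
          Real.exp (-(μ₁ - μ₂) ^ 2 / (2 * (σ₁ - σ₂) ^ 2)) :=
  wasserstein1_gaussians_exact_general Φinv hΦinv μ₁ μ₂ σ₁ σ₂ hne
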